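/- For real ν > -1 and n ≥ 1, the Laguerre functions L_n^ν (normalized Laguerre polynomials times x^{ν/2} e^{-x/2}) satisfy the integral identity (L_{n-1}^ν(x) L_n^ν(y) - L_{n-1}^ν(y) L_n^ν(x))/(x - y) = (1/2) ∫_0^1 [L_{n-1}^ν(tx) L_n^ν(ty) + L_{n-1}^ν(ty) L_n^ν(tx)] dt for all x ≠ y in (0,∞). -/

import Mathlib

/-!
Put `D(t) = L_{n-1}^ν(tx) L_n^ν(ty) - L_{n-1}^ν(ty) L_n^ν(tx)`. By the ladder relations
`z L_n' = (n + (ν - z)/2) L_n - √(n(n+ν)) L_{n-1}` and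
`z L_{n-1}' = √(n(n+ν)) L_n - (n + (ν - z)/2) L_{n-1}`, the `√(n(n+ν))` terms of `D'(t)` cancel and
`D'(t) = (x - y)/2 · [L_{n-1}^ν(tx) L_n^ν(ty) + L_{n-1}^ν(ty) L_n^ν(tx)]`; the identity is then
`D(1) - D(0) = ∫₀¹ D'` with `D(0) = 0`. For `-1 < ν < 0` the Laguerre functions blow up at `0`,
but `D(t) = t^ν A(t)` with `A` smooth and `A(0) = 0`, so `D` is still continuous on `[0, 1]`.
-/

noncomputable def laguerrePoly (n : ℕ) (ν : ℝ) (x : ℝ) : ℝ :=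
  ∑ k ∈ Finset.range (n + 1),
    (-1) ^ k * Real.Gamma ((n : ℝ) + ν + 1) /
      (Real.Gamma ((k : ℝ) + ν + 1) * (Nat.factorial (n - k)) * (Nat.factorial k)) * x ^ k

noncomputable def laguerreFun (n : ℕ) (ν : ℝ) (x : ℝ) : ℝ :=
  Real.sqrt (Real.Gamma ((n : ℝ) + 1) / Real.Gamma ((n : ℝ) + ν + 1)) *
    laguerrePoly n ν x * x ^ (ν / 2) * Real.exp (-x / 2)

open Finset

variable {ν : ℝ}

noncomputable def laguerreCoeff (n : ℕ) (ν : ℝ) (k : ℕ) : ℝ :=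
  (-1) ^ k * Real.Gamma ((n : ℝ) + ν + 1) /
    (Real.Gamma ((k : ℝ) + ν + 1) * (Nat.factorial (n - k)) * (Nat.factorial k))

theorem laguerrePoly_eq_sum (n : ℕ) (ν x : ℝ) :
    laguerrePoly n ν x = ∑ k ∈ range (n + 1), laguerreCoeff n ν k * x ^ k := rfl

theorem Gamma_nat_add_pos (hν : -1 < ν) (k : ℕ) : 0 < Real.Gamma ((k : ℝ) + ν + 1) :=
  Real.Gamma_pos_of_pos (by linarith [(Nat.cast_nonneg k : (0 : ℝ) ≤ k)])

theorem Gamma_nat_succ_add (hν : -1 < ν) (k : ℕ) :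
    Real.Gamma (((k + 1 : ℕ) : ℝ) + ν + 1) = ((k : ℝ) + 1 + ν) * Real.Gamma ((k : ℝ) + ν + 1) := by
  rw [show ((k + 1 : ℕ) : ℝ) + ν + 1 = ((k : ℝ) + ν + 1) + 1 by push_cast; ring,
    Real.Gamma_add_one (by linarith [(Nat.cast_nonneg k : (0 : ℝ) ≤ k)])]
  ring

theorem cast_factorial_succ_sub {m k : ℕ} (hk : k ≤ m) :
    ((m + 1 - k).factorial : ℝ) = ((m : ℝ) - k + 1) * (m - k).factorial := by
  rw [Nat.succ_sub hk, Nat.factorial_succ]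
  push_cast [Nat.cast_sub hk]
  ring

theorem laguerreCoeff_succ_left (hν : -1 < ν) {m k : ℕ} (hk : k ≤ m) :
    ((m : ℝ) + 1 - k) * laguerreCoeff (m + 1) ν k = ((m : ℝ) + 1 + ν) * laguerreCoeff m ν k := by
  have hmk : ((m : ℝ) - k + 1) ≠ 0 := by
    have : (k : ℝ) ≤ m := by exact_mod_cast hk
    linarith
  have := (Gamma_nat_add_pos hν k).ne'
  unfold laguerreCoeff
  rw [Gamma_nat_succ_add hν, cast_factorial_succ_sub hk]
  field_simp
  ring

theorem laguerreCoeff_succ_right (hν : -1 < ν) {m k : ℕ} (hk : k < m) :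
    ((k : ℝ) + 1) * (laguerreCoeff m ν (k + 1) - laguerreCoeff (m + 1) ν (k + 1))
      = laguerreCoeff m ν k := by
  have hmk : ((m : ℝ) - k) ≠ 0 := by
    have : (k : ℝ) < m := by exact_mod_cast hk
    linarith
  have hk1 : ((k : ℝ) + 1 + ν) ≠ 0 := by linarith [(Nat.cast_nonneg k : (0 : ℝ) ≤ k)]
  have := (Gamma_nat_add_pos hν k).ne'
  obtain ⟨j, rfl⟩ : ∃ j, m = k + 1 + j := ⟨m - (k + 1), by omega⟩
  unfold laguerreCoeff
  rw [Gamma_nat_succ_add hν, Gamma_nat_succ_add hν,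
    show k + 1 + j + 1 - (k + 1) = j + 1 by omega, show k + 1 + j - k = j + 1 by omega,
    show k + 1 + j - (k + 1) = j by omega, Nat.factorial_succ, Nat.factorial_succ]
  push_cast
  field_simp
  ring

theorem laguerreCoeff_self (hν : -1 < ν) (n : ℕ) :
    laguerreCoeff n ν n = (-1) ^ n / n.factorial := by
  have := (Gamma_nat_add_pos hν n).ne'
  simp only [laguerreCoeff, Nat.sub_self, Nat.factorial_zero, Nat.cast_one, mul_one]
  field_simp

noncomputable def laguerrePolyDeriv (n : ℕ) (ν : ℝ) (x : ℝ) : ℝ :=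
  ∑ k ∈ range (n + 1), laguerreCoeff n ν k * (k * x ^ (k - 1))

theorem hasDerivAt_laguerrePoly (n : ℕ) (ν x : ℝ) :
    HasDerivAt (laguerrePoly n ν) (laguerrePolyDeriv n ν x) x := by
  simp only [funext (laguerrePoly_eq_sum n ν)]
  exact HasDerivAt.fun_sum fun k _ => (hasDerivAt_pow k x).const_mul (laguerreCoeff n ν k)

theorem differentiable_laguerrePoly (n : ℕ) (ν : ℝ) : Differentiable ℝ (laguerrePoly n ν) :=
  fun x => (hasDerivAt_laguerrePoly n ν x).differentiableAt

theorem mul_laguerrePolyDeriv (n : ℕ) (ν x : ℝ) :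
    x * laguerrePolyDeriv n ν x = ∑ k ∈ range (n + 1), (k : ℝ) * laguerreCoeff n ν k * x ^ k := by
  rw [laguerrePolyDeriv, mul_sum]
  refine sum_congr rfl fun k _ => ?_
  cases k with
  | zero => simp
  | succ j => rw [Nat.add_sub_cancel, pow_succ]; ring

theorem laguerrePolyDeriv_eq_sum (n : ℕ) (ν x : ℝ) :
    laguerrePolyDeriv n ν x = ∑ k ∈ range n, ((k : ℝ) + 1) * laguerreCoeff n ν (k + 1) * x ^ k := by
  rw [laguerrePolyDeriv, sum_range_succ']
  simp only [Nat.cast_zero, zero_mul, mul_zero, add_zero, Nat.add_sub_cancel, Nat.cast_succ]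
  exact sum_congr rfl fun k _ => by ring

theorem mul_laguerrePolyDeriv_succ (hν : -1 < ν) (m : ℕ) (x : ℝ) :
    x * laguerrePolyDeriv (m + 1) ν x
      = ((m : ℝ) + 1) * laguerrePoly (m + 1) ν x - ((m : ℝ) + 1 + ν) * laguerrePoly m ν x := by
  have hterm : ∀ k ∈ range (m + 1), (k : ℝ) * laguerreCoeff (m + 1) ν k * x ^ k
      = ((m : ℝ) + 1) * (laguerreCoeff (m + 1) ν k * x ^ k)
        - ((m : ℝ) + 1 + ν) * (laguerreCoeff m ν k * x ^ k) := fun k hk => by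
    linear_combination (-x ^ k) * laguerreCoeff_succ_left hν (Nat.lt_succ_iff.mp (mem_range.mp hk))
  rw [mul_laguerrePolyDeriv, laguerrePoly_eq_sum, laguerrePoly_eq_sum, sum_range_succ,
    sum_range_succ _ (m + 1), sum_congr rfl hterm, sum_sub_distrib, ← mul_sum, ← mul_sum]
  push_cast
  ring

theorem laguerrePolyDeriv_succ (hν : -1 < ν) (m : ℕ) (x : ℝ) :
    laguerrePolyDeriv (m + 1) ν x = laguerrePolyDeriv m ν x - laguerrePoly m ν x := by
  have hterm : ∀ k ∈ range m, ((k : ℝ) + 1) * laguerreCoeff (m + 1) ν (k + 1) * x ^ k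
      = ((k : ℝ) + 1) * laguerreCoeff m ν (k + 1) * x ^ k - laguerreCoeff m ν k * x ^ k :=
    fun k hk => by linear_combination (-x ^ k) * laguerreCoeff_succ_right hν (mem_range.mp hk)
  have hedge : ((m : ℝ) + 1) * laguerreCoeff (m + 1) ν (m + 1) = - laguerreCoeff m ν m := by
    rw [laguerreCoeff_self hν, laguerreCoeff_self hν, Nat.factorial_succ, pow_succ]
    push_cast
    field_simp
  rw [laguerrePolyDeriv_eq_sum, laguerrePolyDeriv_eq_sum, laguerrePoly_eq_sum, sum_range_succ,
    sum_congr rfl hterm, sum_sub_distrib, sum_range_succ _ m]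
  linear_combination x ^ m * hedge

theorem mul_laguerrePolyDeriv_eq (hν : -1 < ν) (m : ℕ) (x : ℝ) :
    x * laguerrePolyDeriv m ν x
      = ((m : ℝ) + 1) * laguerrePoly (m + 1) ν x - ((m : ℝ) + 1 + ν - x) * laguerrePoly m ν x := by
  linear_combination -x * laguerrePolyDeriv_succ hν m x + mul_laguerrePolyDeriv_succ hν m x

noncomputable def laguerreNorm (n : ℕ) (ν : ℝ) : ℝ :=
  Real.sqrt (Real.Gamma ((n : ℝ) + 1) / Real.Gamma ((n : ℝ) + ν + 1))

theorem laguerreFun_def (n : ℕ) (ν x : ℝ) :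
    laguerreFun n ν x = laguerreNorm n ν * laguerrePoly n ν x * x ^ (ν / 2) * Real.exp (-x / 2) :=
  rfl

theorem laguerreNorm_succ_eq (hν : -1 < ν) (m : ℕ) :
    ((m : ℝ) + 1 + ν) * laguerreNorm (m + 1) ν
      = Real.sqrt (((m : ℝ) + 1) * ((m : ℝ) + 1 + ν)) * laguerreNorm m ν := by
  have hmν : 0 < (m : ℝ) + 1 + ν := by linarith [(Nat.cast_nonneg m : (0 : ℝ) ≤ m)]
  have hm : 0 < (m : ℝ) + 1 := by positivity
  have hΓ := (Gamma_nat_add_pos hν m).ne'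
  have hΓ' := (Real.Gamma_pos_of_pos hm).ne'
  unfold laguerreNorm
  nth_rewrite 1 [← Real.sqrt_sq hmν.le]
  rw [← Real.sqrt_mul (sq_nonneg _), ← Real.sqrt_mul (by positivity), Gamma_nat_succ_add hν,
    Nat.cast_succ, Real.Gamma_add_one hm.ne']
  congr 1
  field_simp

theorem laguerreNorm_eq_succ (hν : -1 < ν) (m : ℕ) :
    ((m : ℝ) + 1) * laguerreNorm m ν
      = Real.sqrt (((m : ℝ) + 1) * ((m : ℝ) + 1 + ν)) * laguerreNorm (m + 1) ν := by
  have hmν : 0 < (m : ℝ) + 1 + ν := by linarith [(Nat.cast_nonneg m : (0 : ℝ) ≤ m)]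
  have hsq := Real.sq_sqrt (by positivity : 0 ≤ ((m : ℝ) + 1) * ((m : ℝ) + 1 + ν))
  refine mul_left_cancel₀ hmν.ne' ?_
  linear_combination (-Real.sqrt (((m : ℝ) + 1) * ((m : ℝ) + 1 + ν))) * laguerreNorm_succ_eq hν m
    - laguerreNorm m ν * hsq

theorem hasDerivAt_laguerreFun (n : ℕ) (ν : ℝ) {x : ℝ} (hx : x ≠ 0) :
    HasDerivAt (laguerreFun n ν)
      (laguerreNorm n ν * (x * laguerrePolyDeriv n ν x + (ν - x) / 2 * laguerrePoly n ν x)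
        * x ^ (ν / 2) * Real.exp (-x / 2) / x) x := by
  have hexp : HasDerivAt (fun s : ℝ => Real.exp (-s / 2)) (Real.exp (-x / 2) * (-1 / 2)) x :=
    ((hasDerivAt_neg x).div_const 2).exp
  have h := (((hasDerivAt_laguerrePoly n ν x).const_mul (laguerreNorm n ν)).mul
    (Real.hasDerivAt_rpow_const (p := ν / 2) (Or.inl hx))).mul hexp
  refine h.congr_deriv ?_
  rw [Real.rpow_sub_one hx]
  simp only [Pi.mul_apply]
  field_simp
  ring

theorem hasDerivAt_laguerreFun_succ (hν : -1 < ν) (m : ℕ) {x : ℝ} (hx : x ≠ 0) :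
    HasDerivAt (laguerreFun (m + 1) ν)
      ((((m : ℝ) + 1 + (ν - x) / 2) * laguerreFun (m + 1) ν x
        - Real.sqrt (((m : ℝ) + 1) * ((m : ℝ) + 1 + ν)) * laguerreFun m ν x) / x) x := by
  refine (hasDerivAt_laguerreFun (m + 1) ν hx).congr_deriv ?_
  rw [mul_laguerrePolyDeriv_succ hν, laguerreFun_def, laguerreFun_def]
  linear_combination (-(laguerrePoly m ν x * x ^ (ν / 2) * Real.exp (-x / 2) / x))
    * laguerreNorm_succ_eq hν m

theorem hasDerivAt_laguerreFun_of_succ (hν : -1 < ν) (m : ℕ) {x : ℝ} (hx : x ≠ 0) :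
    HasDerivAt (laguerreFun m ν)
      ((Real.sqrt (((m : ℝ) + 1) * ((m : ℝ) + 1 + ν)) * laguerreFun (m + 1) ν x
        - ((m : ℝ) + 1 + (ν - x) / 2) * laguerreFun m ν x) / x) x := by
  refine (hasDerivAt_laguerreFun m ν hx).congr_deriv ?_
  rw [mul_laguerrePolyDeriv_eq hν, laguerreFun_def, laguerreFun_def]
  linear_combination (laguerrePoly (m + 1) ν x * x ^ (ν / 2) * Real.exp (-x / 2) / x)
    * laguerreNorm_eq_succ hν m

noncomputable def laguerreDamped (n : ℕ) (ν x : ℝ) : ℝ :=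
  laguerreNorm n ν * laguerrePoly n ν x * Real.exp (-x / 2)

@[fun_prop]
theorem differentiable_laguerreDamped (n : ℕ) (ν : ℝ) : Differentiable ℝ (laguerreDamped n ν) :=
  ((differentiable_laguerrePoly n ν).const_mul _).mul (by fun_prop)

theorem laguerreFun_mul_mul_laguerreFun_mul (m n : ℕ) {t x y : ℝ} (ht : 0 ≤ t) (hx : 0 ≤ x)
    (hy : 0 ≤ y) :
    laguerreFun m ν (t * x) * laguerreFun n ν (t * y)
      = t ^ ν * (x ^ (ν / 2) * y ^ (ν / 2)
          * (laguerreDamped m ν (t * x) * laguerreDamped n ν (t * y))) := by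
  have htν : t ^ ν = t ^ (ν / 2) * t ^ (ν / 2) := by
    rw [← sq, ← Real.rpow_natCast, ← Real.rpow_mul ht]
    norm_num
  rw [laguerreFun_def, laguerreFun_def, laguerreDamped, laguerreDamped, Real.mul_rpow ht hx,
    Real.mul_rpow ht hy, htν]
  ring

theorem continuous_rpow_mul_of_eq_zero (hν : -1 < ν) {A : ℝ → ℝ} (hA : Continuous A)
    (hA₀ : DifferentiableAt ℝ A 0) (hA0 : A 0 = 0) : Continuous fun t => t ^ ν * A t := by
  have hfactor : (fun t => t ^ ν * A t) = fun t => t ^ (ν + 1) * dslope A 0 t := by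
    funext t
    rcases eq_or_ne t 0 with rfl | ht
    · simp [hA0, Real.zero_rpow (by linarith : ν + 1 ≠ 0)]
    · have hA := sub_smul_dslope A 0 t
      rw [sub_zero, hA0, sub_zero, smul_eq_mul] at hA
      rw [Real.rpow_add_one ht, ← hA]
      ring
  rw [hfactor]
  exact (Real.continuous_rpow_const (by linarith)).mul
    (continuousOn_univ.mp ((continuousOn_dslope Filter.univ_mem).mpr ⟨hA.continuousOn, hA₀⟩))

theorem continuousOn_laguerreFun_crossDiff (hν : -1 < ν) (m n : ℕ) {x y : ℝ} (hx : 0 ≤ x)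
    (hy : 0 ≤ y) :
    ContinuousOn (fun t => laguerreFun m ν (t * x) * laguerreFun n ν (t * y)
      - laguerreFun m ν (t * y) * laguerreFun n ν (t * x)) (Set.Ici 0) := by
  set A : ℝ → ℝ := fun t => x ^ (ν / 2) * y ^ (ν / 2)
    * (laguerreDamped m ν (t * x) * laguerreDamped n ν (t * y)
      - laguerreDamped m ν (t * y) * laguerreDamped n ν (t * x))
  have hA : Differentiable ℝ A := by fun_prop
  refine (continuous_rpow_mul_of_eq_zero hν hA.continuous (hA 0) (by simp [A])).continuousOn.congr
    fun t ht => ?_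
  simp only [A]
  rw [laguerreFun_mul_mul_laguerreFun_mul m n ht hx hy,
    laguerreFun_mul_mul_laguerreFun_mul m n ht hy hx]
  ring

theorem intervalIntegrable_laguerreFun_mul (hν : -1 < ν) (m n : ℕ) {x y a b : ℝ} (hx : 0 ≤ x)
    (hy : 0 ≤ y) (ha : 0 ≤ a) (hb : 0 ≤ b) :
    IntervalIntegrable (fun t => laguerreFun m ν (t * x) * laguerreFun n ν (t * y))
      MeasureTheory.volume a b := by
  have hB : Differentiable ℝ fun t => x ^ (ν / 2) * y ^ (ν / 2)
      * (laguerreDamped m ν (t * x) * laguerreDamped n ν (t * y)) := by fun_prop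
  refine ((intervalIntegral.intervalIntegrable_rpow' hν).mul_continuousOn
    hB.continuous.continuousOn).congr
    fun t ht => ?_
  exact (laguerreFun_mul_mul_laguerreFun_mul m n ((le_min ha hb).trans ht.1.le) hx hy).symm

theorem hasDerivAt_laguerreFun_crossDiff (hν : -1 < ν) (m : ℕ) {x y t : ℝ} (hx : x ≠ 0)
    (hy : y ≠ 0) (ht : t ≠ 0) :
    HasDerivAt (fun s => laguerreFun m ν (s * x) * laguerreFun (m + 1) ν (s * y)
        - laguerreFun m ν (s * y) * laguerreFun (m + 1) ν (s * x))
      ((x - y) / 2 * (laguerreFun m ν (t * x) * laguerreFun (m + 1) ν (t * y)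
        + laguerreFun m ν (t * y) * laguerreFun (m + 1) ν (t * x))) t := by
  have hcomp : ∀ {f : ℝ → ℝ} {f' z : ℝ}, HasDerivAt f f' (t * z) →
      HasDerivAt (fun s => f (s * z)) (f' * z) t :=
    fun hf => hf.comp t (hasDerivAt_mul_const _)
  refine (((hcomp (hasDerivAt_laguerreFun_of_succ hν m (mul_ne_zero ht hx))).mul
      (hcomp (hasDerivAt_laguerreFun_succ hν m (mul_ne_zero ht hy)))).sub
    ((hcomp (hasDerivAt_laguerreFun_of_succ hν m (mul_ne_zero ht hy))).mul
      (hcomp (hasDerivAt_laguerreFun_succ hν m (mul_ne_zero ht hx))))).congr_deriv ?_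
  field_simp
  ring

/-- the integral identity for the Laguerre Christoffel–Darboux kernel:
`(L_{n-1}^ν(x)L_n^ν(y) - L_{n-1}^ν(y)L_n^ν(x))/(x-y)
  = (1/2)∫₀¹ [L_{n-1}^ν(tx)L_n^ν(ty) + L_{n-1}^ν(ty)L_n^ν(tx)] dt`. -/
theorem stmt_4 (ν : ℝ) (hν : -1 < ν) (n : ℕ) (hn : 1 ≤ n) (x y : ℝ)
    (hx : 0 < x) (hy : 0 < y) (hxy : x ≠ y) :
    (laguerreFun (n - 1) ν x * laguerreFun n ν y -
        laguerreFun (n - 1) ν y * laguerreFun n ν x) / (x - y)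
      = (1 / 2) * ∫ t in (0 : ℝ)..1,
          (laguerreFun (n - 1) ν (t * x) * laguerreFun n ν (t * y) +
            laguerreFun (n - 1) ν (t * y) * laguerreFun n ν (t * x)) := by
  obtain ⟨m, rfl⟩ : ∃ m, n = m + 1 := ⟨n - 1, by omega⟩
  rw [Nat.add_sub_cancel]
  have hFTC := intervalIntegral.integral_eq_sub_of_hasDeriv_right_of_le zero_le_one
    ((continuousOn_laguerreFun_crossDiff hν m (m + 1) hx.le hy.le).mono Set.Icc_subset_Ici_self)
    (fun t ht => (hasDerivAt_laguerreFun_crossDiff hν m hx.ne' hy.ne' ht.1.ne').hasDerivWithinAt)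
    (((intervalIntegrable_laguerreFun_mul hν m (m + 1) hx.le hy.le le_rfl zero_le_one).add
      (intervalIntegrable_laguerreFun_mul hν m (m + 1) hy.le hx.le le_rfl zero_le_one)).const_mul _)
  simp only [intervalIntegral.integral_const_mul, zero_mul, one_mul, sub_self, sub_zero] at hFTC
  rw [← hFTC]
  field_simp [sub_ne_zero.mpr hxy]
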